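/- With V_j := −( I_j/(j!·(j+3)) − I_{j+2}/(4·(j+3)!) ) for j ≥ 1, one has limsup_{j→∞} |V_j|^{1/(j+3)} ≥ 2/3. -/

import Mathlib

open MeasureTheory Set Real

lemma exp_neg_image : (fun x : ℝ => Real.exp (-x)) '' Set.Ioi 0 = Set.Ioo (0:ℝ) 1 := by
  ext u
  constructor
  · rintro ⟨x, hx, rfl⟩
    exact ⟨Real.exp_pos _, Real.exp_lt_one_iff.2 (by simpa using hx)⟩
  · rintro ⟨h0, h1⟩
    exact ⟨-Real.log u, by simpa using Real.log_neg h0 h1, by simp [Real.exp_log h0]⟩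

lemma exp_neg_deriv (x : ℝ) : HasDerivWithinAt (fun x : ℝ => Real.exp (-x)) (-Real.exp (-x)) (Set.Ioi 0) x := by
  have := ((Real.hasDerivAt_exp (-x)).comp x (hasDerivAt_neg x))
  simpa [mul_comm, Function.comp_def] using this.hasDerivWithinAt

lemma exp_neg_inj : Set.InjOn (fun x : ℝ => Real.exp (-x)) (Set.Ioi 0) := by
  intro a _ b _ h
  simpa using Real.exp_injective h

lemma key_eq (a k : ℕ) (x : ℝ) :
    ((-1:ℝ)^k) * (x ^ (k:ℝ) * Real.exp (-((a:ℝ)+1) * x ^ (1:ℝ)))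
      = |(-Real.exp (-x))| • ((Real.exp (-x))^a * (Real.log (Real.exp (-x)))^k) := by
  rw [abs_neg, abs_of_pos (Real.exp_pos _), smul_eq_mul, Real.log_exp, Real.rpow_one,
    Real.rpow_natCast, neg_pow]
  have : Real.exp (-((a:ℝ)+1) * x) = Real.exp (-x) * Real.exp (-x) ^ a := by
    rw [← Real.exp_nat_mul, ← Real.exp_add]; ring_nf
  rw [this]; ring

lemma mom_int (a k : ℕ) : IntegrableOn (fun u : ℝ => u^a * (Real.log u)^k) (Set.Ioo 0 1) := by
  rw [← exp_neg_image,
    integrableOn_image_iff_integrableOn_abs_deriv_smul measurableSet_Ioi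
      (fun x _ => exp_neg_deriv x) exp_neg_inj]
  have hk : (-1:ℝ) < (k:ℝ) := by
    have : (0:ℝ) ≤ k := Nat.cast_nonneg k
    linarith
  have base : IntegrableOn (fun x : ℝ => x ^ (k:ℝ) * Real.exp (-((a:ℝ)+1) * x ^ (1:ℝ))) (Set.Ioi 0) :=
    integrableOn_rpow_mul_exp_neg_mul_rpow hk one_pos (by positivity)
  exact IntegrableOn.congr_fun (base.const_mul ((-1:ℝ)^k)) (fun x _ => key_eq a k x) measurableSet_Ioi

lemma mom_eq (a k : ℕ) :
    ∫ u in Set.Ioo (0:ℝ) 1, u^a * (Real.log u)^k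
      = (-1:ℝ)^k * (k.factorial : ℝ) / ((a:ℝ)+1)^(k+1) := by
  rw [← exp_neg_image,
    integral_image_eq_integral_abs_deriv_smul measurableSet_Ioi
      (fun x _ => exp_neg_deriv x) exp_neg_inj]
  have h1 : ∫ x in Set.Ioi (0:ℝ), |(-Real.exp (-x))| • ((Real.exp (-x))^a * (Real.log (Real.exp (-x)))^k)
      = ∫ x in Set.Ioi (0:ℝ), ((-1:ℝ)^k) * (x ^ (((k:ℝ)+1)-1) * Real.exp (-(((a:ℝ)+1) * x))) := by
    refine setIntegral_congr_fun measurableSet_Ioi (fun x _ => ?_)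
    rw [← key_eq a k x]
    have h2 : ((k:ℝ)+1)-1 = (k:ℝ) := by ring
    rw [h2, Real.rpow_one]
    ring_nf
  rw [h1, integral_const_mul, integral_rpow_mul_exp_neg_mul_Ioi (by positivity) (by positivity)]
  have hg : Real.Gamma ((k:ℝ)+1) = (k.factorial : ℝ) := Real.Gamma_nat_eq_factorial k
  rw [hg, show ((k:ℝ)+1) = ((k+1:ℕ):ℝ) by push_cast; ring, Real.rpow_natCast]
  have ha : ((a:ℝ)+1) ≠ 0 := by positivity
  field_simp
  rw [← mul_pow, one_div, inv_mul_cancel₀ ha, one_pow]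

/-- `I j = ∫₀¹ (log(u²))^j / (1-u²) du`. -/
noncomputable def I (j : ℕ) : ℝ :=
  ∫ u in Set.Ioo (0:ℝ) 1, (Real.log (u^2))^j / (1 - u^2)

noncomputable def E' (j : ℕ) : ℝ :=
  ∫ u in Set.Ioo (0:ℝ) 1, u^4 * (Real.log (u^2))^j / (1 - u^2)

lemma log_sq (u : ℝ) : Real.log (u^2) = 2 * Real.log u := by
  rw [Real.log_pow]; norm_num

lemma den_ineq {u : ℝ} (h0 : 0 < u) (h1 : u < 1) : 2*u^2*(-Real.log u) ≤ 1 - u^2 := by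
  have hv0 : 0 < u^2 := by positivity
  have hlog := Real.log_le_sub_one_of_pos (x := (u^2)⁻¹) (by positivity)
  rw [Real.log_inv, log_sq] at hlog
  have h2 : (u^2) * ((u^2)⁻¹ - 1) = 1 - u^2 := by field_simp
  nlinarith [hlog, hv0]

lemma ptbound (k : ℕ) {u : ℝ} (hu : u ∈ Set.Ioo (0:ℝ) 1) :
    |u^4 * (Real.log (u^2))^(k+1) / (1 - u^2)| ≤ 2^k * (u^2 * |Real.log u|^k) := by
  obtain ⟨h0, h1⟩ := hu
  have hlog : Real.log u < 0 := Real.log_neg h0 h1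
  have habs : |Real.log u| = -Real.log u := abs_of_neg hlog
  have hden : 0 < 1 - u^2 := by nlinarith
  have hden2 : 2*u^2*(-Real.log u) ≤ 1 - u^2 := den_ineq h0 h1
  have hd2pos : 0 < 2*u^2*(-Real.log u) := by
    have : 0 < -Real.log u := by linarith
    positivity
  rw [abs_div, abs_of_pos hden, abs_mul, abs_pow, abs_pow, log_sq, abs_mul,
    abs_of_pos h0, abs_of_pos (by norm_num : (0:ℝ) < 2)]
  calc u^4 * (2*|Real.log u|)^(k+1) / (1-u^2)
      ≤ u^4 * (2*|Real.log u|)^(k+1) / (2*u^2*(-Real.log u)) := by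
        apply div_le_div_of_nonneg_left (by positivity) hd2pos hden2
    _ = 2^k * (u^2 * |Real.log u|^k) := by
        rw [habs, div_eq_iff (ne_of_gt hd2pos), mul_pow, pow_succ]
        ring

lemma contOn (j : ℕ) : ContinuousOn (fun u : ℝ => u^4 * (Real.log (u^2))^j / (1 - u^2)) (Set.Ioo 0 1) := by
  apply ContinuousOn.div
  · apply ContinuousOn.mul (by fun_prop)
    apply ContinuousOn.pow
    apply ContinuousOn.log (by fun_prop)
    intro u hu
    have := hu.1
    positivity
  · fun_prop
  · intro u hu
    have h1 := hu.1; have h2 := hu.2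
    nlinarith

lemma hE_int (k : ℕ) :
    MeasureTheory.IntegrableOn (fun u : ℝ => u^4 * (Real.log (u^2))^(k+1) / (1 - u^2)) (Set.Ioo 0 1) := by
  have hg : MeasureTheory.IntegrableOn
      (fun u : ℝ => (2^k * (-1:ℝ)^k) * (u^2 * (Real.log u)^k)) (Set.Ioo 0 1) :=
    (mom_int 2 k).const_mul _
  refine MeasureTheory.Integrable.mono hg
    ((contOn (k+1)).aestronglyMeasurable measurableSet_Ioo) ?_
  rw [MeasureTheory.ae_restrict_iff' measurableSet_Ioo]
  filter_upwards with u hu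
  have h := ptbound k hu
  calc ‖u^4 * (Real.log (u^2))^(k+1) / (1 - u^2)‖
      = |u^4 * (Real.log (u^2))^(k+1) / (1 - u^2)| := rfl
    _ ≤ 2^k * (u^2 * |Real.log u|^k) := h
    _ ≤ ‖(2^k * (-1:ℝ)^k) * (u^2 * (Real.log u)^k)‖ := by
        rw [Real.norm_eq_abs, abs_mul, abs_mul, abs_mul, abs_pow, abs_pow, abs_pow]
        simp [abs_of_nonneg (sq_nonneg u)]

lemma E_bound (k : ℕ) : |E' (k+1)| ≤ 2^k * (k.factorial : ℝ) / 3^(k+1) := by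
  have hg : MeasureTheory.IntegrableOn
      (fun u : ℝ => (2^k * (-1:ℝ)^k) * (u^2 * (Real.log u)^k)) (Set.Ioo 0 1) :=
    (mom_int 2 k).const_mul _
  have h1 : |E' (k+1)| ≤ ∫ u in Set.Ioo (0:ℝ) 1, (2^k * (-1:ℝ)^k) * (u^2 * (Real.log u)^k) := by
    have h0 : |E' (k+1)| = ‖∫ u in Set.Ioo (0:ℝ) 1, u^4 * (Real.log (u^2))^(k+1) / (1 - u^2)‖ := by
      rw [Real.norm_eq_abs]; rfl
    rw [h0]
    refine (MeasureTheory.norm_integral_le_integral_norm _).trans ?_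
    refine MeasureTheory.setIntegral_mono_on ((hE_int k).norm) hg measurableSet_Ioo ?_
    intro u hu
    have h := ptbound k hu
    have habs : |Real.log u| = -Real.log u := abs_of_neg (Real.log_neg hu.1 hu.2)
    have he : (2:ℝ)^k * (-1)^k * (u^2 * (Real.log u)^k) = 2^k * (u^2 * (-Real.log u)^k) := by
      rw [neg_pow]; ring
    rw [he, ← habs]
    exact h
  rw [MeasureTheory.integral_const_mul, mom_eq 2 k] at h1
  have hsq : ((-1:ℝ)^k) * ((-1:ℝ)^k) = 1 := by
    rw [← pow_add]
    exact Even.neg_one_pow ⟨k, by ring⟩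
  have he2 : (2:ℝ)^k * (-1)^k * ((-1)^k * (k.factorial:ℝ) / (((2:ℕ):ℝ)+1)^(k+1))
      = ((-1:ℝ)^k*(-1:ℝ)^k) * (2^k * (k.factorial:ℝ) / 3^(k+1)) := by
    push_cast
    ring
  rw [he2, hsq, one_mul] at h1
  exact h1

lemma I_eq (k : ℕ) :
    I (k+1) = (-1:ℝ)^(k+1) * 2^(k+1) * (((k+1).factorial : ℝ)) * (1 + 1/3^(k+2)) + E' (k+1) := by
  have hf1 : MeasureTheory.IntegrableOn (fun u : ℝ => (2:ℝ)^(k+1) * (Real.log u)^(k+1)) (Set.Ioo 0 1) := by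
    have := (mom_int 0 (k+1)).const_mul ((2:ℝ)^(k+1))
    simp at this; exact this
  have hf2 : MeasureTheory.IntegrableOn (fun u : ℝ => (2:ℝ)^(k+1) * (u^2 * (Real.log u)^(k+1))) (Set.Ioo 0 1) :=
    (mom_int 2 (k+1)).const_mul _
  have hf3 := hE_int k
  have hsplit : ∀ u ∈ Set.Ioo (0:ℝ) 1,
      (Real.log (u^2))^(k+1) / (1 - u^2)
        = ((fun u : ℝ => (2:ℝ)^(k+1) * (Real.log u)^(k+1)) u
            + (fun u : ℝ => (2:ℝ)^(k+1) * (u^2 * (Real.log u)^(k+1))) u)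
          + (fun u : ℝ => u^4 * (Real.log (u^2))^(k+1) / (1 - u^2)) u := by
    intro u hu
    have hne : 1 - u^2 ≠ 0 := by
      have h1 := hu.1; have h2 := hu.2
      have : 0 < 1 - u^2 := by nlinarith
      exact ne_of_gt this
    simp only [log_sq]
    field_simp
    rw [mul_pow]
    ring
  have : I (k+1) = ∫ u in Set.Ioo (0:ℝ) 1,
      (((fun u : ℝ => (2:ℝ)^(k+1) * (Real.log u)^(k+1)) u
            + (fun u : ℝ => (2:ℝ)^(k+1) * (u^2 * (Real.log u)^(k+1))) u)
          + (fun u : ℝ => u^4 * (Real.log (u^2))^(k+1) / (1 - u^2)) u) :=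
    MeasureTheory.setIntegral_congr_fun measurableSet_Ioo hsplit
  have hf12 : MeasureTheory.IntegrableOn
      (fun u : ℝ => (2:ℝ)^(k+1) * (Real.log u)^(k+1) + (2:ℝ)^(k+1) * (u^2 * (Real.log u)^(k+1)))
      (Set.Ioo 0 1) := hf1.add hf2
  rw [this, MeasureTheory.integral_add hf12 hf3, MeasureTheory.integral_add hf1 hf2]
  have e0 : ∫ u in Set.Ioo (0:ℝ) 1, (2:ℝ)^(k+1) * (Real.log u)^(k+1)
      = (2:ℝ)^(k+1) * ((-1:ℝ)^(k+1) * ((k+1).factorial : ℝ)) := by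
    rw [MeasureTheory.integral_const_mul]
    have := mom_eq 0 (k+1)
    simp only [pow_zero, one_mul, Nat.cast_zero] at this
    rw [this]
    norm_num
  have e2 : ∫ u in Set.Ioo (0:ℝ) 1, (2:ℝ)^(k+1) * (u^2 * (Real.log u)^(k+1))
      = (2:ℝ)^(k+1) * ((-1:ℝ)^(k+1) * ((k+1).factorial : ℝ) / 3^(k+2)) := by
    rw [MeasureTheory.integral_const_mul, mom_eq 2 (k+1)]
    norm_num
  rw [e0, e2]
  have hEdef : E' (k+1) = ∫ u in Set.Ioo (0:ℝ) 1,
      (fun u : ℝ => u^4 * (Real.log (u^2))^(k+1) / (1 - u^2)) u := rfl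
  rw [hEdef]
  ring

/-- `V j = -( I_j/(j!·(j+3)) - I_{j+2}/(4·(j+3)!) )`. -/
noncomputable def V (j : ℕ) : ℝ :=
  -(I j / ((j.factorial : ℝ) * ((j:ℝ)+3)) - I (j+2) / (4 * ((j+3).factorial : ℝ)))

lemma V_formula (k : ℕ) :
    V (k+1) = (-1:ℝ)^k * ((8/9) * 2^(k+1) / (3^(k+2) * ((k:ℝ)+4)))
      - E' (k+1) / (((k+1).factorial : ℝ) * ((k:ℝ)+4))
      + E' (k+3) / (4 * ((k+4).factorial : ℝ)) := by
  have hI1 := I_eq k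
  have hI3 := I_eq (k+2)
  unfold V
  rw [show k+1+2 = k+2+1 from rfl, show k+1+3 = k+4 from rfl, hI1, hI3,
    show k+2+1 = k+3 from rfl, show k+2+1+1 = k+4 from rfl, show k+2+2 = k+4 from rfl]
  have hfac4 : ((k+4).factorial:ℝ) = ((k:ℝ)+4)*((k:ℝ)+3)*((k:ℝ)+2)*((k+1).factorial:ℝ) := by
    rw [show k+4 = k+3+1 from rfl, Nat.factorial_succ, show k+3 = k+2+1 from rfl,
      Nat.factorial_succ, show k+2 = k+1+1 from rfl, Nat.factorial_succ]
    push_cast; ring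
  have hfac3 : ((k+3).factorial:ℝ) = ((k:ℝ)+3)*((k:ℝ)+2)*((k+1).factorial:ℝ) := by
    rw [show k+3 = k+2+1 from rfl, Nat.factorial_succ, show k+2 = k+1+1 from rfl,
      Nat.factorial_succ]
    push_cast; ring
  have hsign1 : (-1:ℝ)^(k+1) = -(-1:ℝ)^k := by rw [pow_add]; norm_num
  have hsign3 : (-1:ℝ)^(k+3) = -(-1:ℝ)^k := by rw [pow_add]; norm_num
  rw [hfac4, hfac3, hsign1, hsign3]
  have h1 : (((k+1).factorial:ℝ)) ≠ 0 := by positivity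
  have h2 : ((k:ℝ)+4) ≠ 0 := by positivity
  have h3 : ((k:ℝ)+3) ≠ 0 := by positivity
  have h4 : ((k:ℝ)+2) ≠ 0 := by positivity
  have h5 : ((3:ℝ))^(k+2) ≠ 0 := by positivity
  have h6 : ((3:ℝ))^(k+4) ≠ 0 := by positivity
  have hc : (((k:ℕ)+1:ℕ):ℝ) = (k:ℝ)+1 := by push_cast; ring
  push_cast
  field_simp
  ring

lemma V_lower (k : ℕ) (hk : 5 ≤ k) :
    (2/3:ℝ)^(k+1)/(6*((k:ℝ)+4)) ≤ |V (k+1)| := by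
  have hV := V_formula k
  have hE1 := E_bound k
  have hE3 := E_bound (k+2)
  rw [show k+2+1 = k+3 from rfl] at hE3
  set K := (k:ℝ) with hKdef
  have hK : (5:ℝ) ≤ K := by rw [hKdef]; exact_mod_cast hk
  have hx : (0:ℝ) < 2^k/3^(k+1) := by positivity
  set x := (2:ℝ)^k/3^(k+1) with hxdef
  set A := (8/9:ℝ) * 2^(k+1) / (3^(k+2) * (K+4)) with hAdef
  set b := - (E' (k+1) / (((k+1).factorial : ℝ) * (K+4)))
      + E' (k+3) / (4 * ((k+4).factorial : ℝ)) with hbdef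
  have hVb : V (k+1) = (-1:ℝ)^k * A + b := by rw [hV]; ring
  have hA0 : 0 ≤ A := by positivity
  have habs1 : A ≤ |V (k+1)| + |b| := by
    have he : (-1:ℝ)^k * A = V (k+1) - b := by rw [hVb]; ring
    calc A = |(-1:ℝ)^k * A| := by
            rw [abs_mul, abs_pow, abs_neg, abs_one, one_pow, one_mul, abs_of_nonneg hA0]
      _ = |V (k+1) - b| := by rw [he]
      _ ≤ |V (k+1)| + |b| := by
            rw [sub_eq_add_neg]
            exact (abs_add_le _ _).trans (by rw [abs_neg])
  have hfp1 : (0:ℝ) < ((k+1).factorial : ℝ) * (K+4) := by positivity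
  have hfp4 : (0:ℝ) < 4 * ((k+4).factorial : ℝ) := by positivity
  have hb : |b| ≤ 2^k * (k.factorial:ℝ)/3^(k+1) / (((k+1).factorial : ℝ) * (K+4))
      + 2^(k+2) * ((k+2).factorial:ℝ)/3^(k+3) / (4 * ((k+4).factorial : ℝ)) := by
    calc |b| ≤ |E' (k+1)| / (((k+1).factorial : ℝ) * (K+4))
        + |E' (k+3)| / (4*((k+4).factorial : ℝ)) := by
          rw [hbdef]
          refine (abs_add_le _ _).trans ?_
          rw [abs_neg, abs_div, abs_div, abs_of_pos hfp1, abs_of_pos hfp4]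
      _ ≤ _ := by gcongr
  have hfne : (k.factorial:ℝ) ≠ 0 := by positivity
  have hf2ne : ((k+2).factorial:ℝ) ≠ 0 := by positivity
  have hK4 : (0:ℝ) < K+4 := by linarith
  have hK3 : (0:ℝ) < K+3 := by linarith
  have hK1 : (0:ℝ) < K+1 := by linarith
  have eA : A = x * (16/(27*(K+4))) := by
    rw [hAdef, hxdef]; field_simp; ring
  have eT : (2/3:ℝ)^(k+1)/(6*(K+4)) = x * (1/(3*(K+4))) := by
    rw [div_pow, hxdef]; field_simp; ring
  have eb1 : 2^k * (k.factorial:ℝ)/3^(k+1) / (((k+1).factorial : ℝ) * (K+4))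
      = x * (1/((K+1)*(K+4))) := by
    rw [Nat.factorial_succ, hxdef]; push_cast; field_simp; ring
  have eb2 : 2^(k+2) * ((k+2).factorial:ℝ)/3^(k+3) / (4*((k+4).factorial : ℝ))
      = x * (1/(9*(K+3)*(K+4))) := by
    have hf4 : ((k+4).factorial:ℝ) = ((K:ℝ)+4)*((K:ℝ)+3)*((k+2).factorial:ℝ) := by
      rw [show k+4 = k+3+1 from rfl, Nat.factorial_succ, show k+3 = k+2+1 from rfl,
        Nat.factorial_succ]
      push_cast; ring
    rw [hf4, hxdef]; field_simp; ring
  have scalar : 1/(3*(K+4)) + (1/((K+1)*(K+4)) + 1/(9*(K+3)*(K+4))) ≤ 16/(27*(K+4)) := by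
    have hdiff : 16/(27*(K+4)) - (1/(3*(K+4)) + (1/((K+1)*(K+4)) + 1/(9*(K+3)*(K+4))))
        = (7*K^2 - 2*K - 63)/(27*(K+1)*(K+3)*(K+4)) := by
      field_simp
      ring
    have hnum : (0:ℝ) ≤ 7*K^2 - 2*K - 63 := by nlinarith
    have : (0:ℝ) ≤ (7*K^2 - 2*K - 63)/(27*(K+1)*(K+3)*(K+4)) := by positivity
    linarith
  rw [eA] at habs1
  rw [eb1, eb2] at hb
  rw [eT]
  linarith [habs1, hb, mul_le_mul_of_nonneg_left scalar hx.le]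

lemma V_upper (k : ℕ) : |V (k+1)| ≤ 2^(k+4) := by
  have hV := V_formula k
  have hE1 := E_bound k
  have hE3 := E_bound (k+2)
  rw [show k+2+1 = k+3 from rfl] at hE3
  set K := (k:ℝ) with hKdef
  have hK0 : (0:ℝ) ≤ K := by rw [hKdef]; positivity
  have hx : (0:ℝ) < 2^k/3^(k+1) := by positivity
  set x := (2:ℝ)^k/3^(k+1) with hxdef
  have hfp1 : (0:ℝ) < ((k+1).factorial : ℝ) * (K+4) := by positivity
  have hfp4 : (0:ℝ) < 4 * ((k+4).factorial : ℝ) := by positivity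
  have hfne : (k.factorial:ℝ) ≠ 0 := by positivity
  have hK4 : (0:ℝ) < K+4 := by linarith
  have hK3 : (0:ℝ) < K+3 := by linarith
  have hK1 : (0:ℝ) < K+1 := by linarith
  have eb1 : 2^k * (k.factorial:ℝ)/3^(k+1) / (((k+1).factorial : ℝ) * (K+4))
      = x * (1/((K+1)*(K+4))) := by
    rw [Nat.factorial_succ, hxdef]; push_cast; field_simp; ring
  have eb2 : 2^(k+2) * ((k+2).factorial:ℝ)/3^(k+3) / (4*((k+4).factorial : ℝ))
      = x * (1/(9*(K+3)*(K+4))) := by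
    have hf2ne : ((k+2).factorial:ℝ) ≠ 0 := by positivity
    have hf4 : ((k+4).factorial:ℝ) = ((K:ℝ)+4)*((K:ℝ)+3)*((k+2).factorial:ℝ) := by
      rw [show k+4 = k+3+1 from rfl, Nat.factorial_succ, show k+3 = k+2+1 from rfl,
        Nat.factorial_succ]
      push_cast; ring
    rw [hf4, hxdef]; field_simp; ring
  have habs : |V (k+1)| ≤ (8/9:ℝ) * 2^(k+1) / (3^(k+2) * (K+4))
      + (|E' (k+1)| / (((k+1).factorial : ℝ) * (K+4))
        + |E' (k+3)| / (4 * ((k+4).factorial : ℝ))) := by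
    rw [hV]
    calc |(-1:ℝ)^k * (8/9 * 2^(k+1) / (3^(k+2) * (K+4)))
          - E' (k+1) / (((k+1).factorial : ℝ) * (K+4))
          + E' (k+3) / (4 * ((k+4).factorial : ℝ))|
        ≤ |(-1:ℝ)^k * (8/9 * 2^(k+1) / (3^(k+2) * (K+4)))
          - E' (k+1) / (((k+1).factorial : ℝ) * (K+4))|
          + |E' (k+3) / (4 * ((k+4).factorial : ℝ))| := abs_add_le _ _
      _ ≤ (|(-1:ℝ)^k * (8/9 * 2^(k+1) / (3^(k+2) * (K+4)))|
          + |E' (k+1) / (((k+1).factorial : ℝ) * (K+4))|)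
          + |E' (k+3) / (4 * ((k+4).factorial : ℝ))| := by
            gcongr
            exact abs_sub _ _
      _ = (8/9:ℝ) * 2^(k+1) / (3^(k+2) * (K+4))
          + (|E' (k+1)| / (((k+1).factorial : ℝ) * (K+4))
            + |E' (k+3)| / (4 * ((k+4).factorial : ℝ))) := by
        rw [abs_mul, abs_pow, abs_neg, abs_one, one_pow, one_mul,
          abs_of_nonneg (by positivity : (0:ℝ) ≤ (8/9:ℝ) * 2^(k+1) / (3^(k+2) * (K+4))),
          abs_div, abs_div, abs_of_pos hfp1, abs_of_pos hfp4]
        ring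
  have hb1 : |E' (k+1)| / (((k+1).factorial : ℝ) * (K+4)) ≤ x * (1/((K+1)*(K+4))) := by
    rw [← eb1]; gcongr
  have hb2 : |E' (k+3)| / (4 * ((k+4).factorial : ℝ)) ≤ x * (1/(9*(K+3)*(K+4))) := by
    rw [← eb2]; gcongr
  have h3pow : (1:ℝ) ≤ 3^(k+1) := one_le_pow₀ (by norm_num)
  have h3pow2 : (1:ℝ) ≤ 3^(k+2) := one_le_pow₀ (by norm_num)
  have hxle : x ≤ 2^k := by
    rw [hxdef]
    exact div_le_self (by positivity) h3pow
  have hs1 : 1/((K+1)*(K+4)) ≤ 1 := by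
    rw [div_le_one (by positivity)]; nlinarith
  have hs2 : 1/(9*(K+3)*(K+4)) ≤ 1 := by
    rw [div_le_one (by positivity)]; nlinarith
  have ht1 : (8/9:ℝ) * 2^(k+1) / (3^(k+2) * (K+4)) ≤ 2^(k+1) := by
    calc (8/9:ℝ) * 2^(k+1) / (3^(k+2) * (K+4)) ≤ (8/9:ℝ) * 2^(k+1) / 1 := by
          refine div_le_div_of_nonneg_left (by positivity) one_pos ?_
          calc (1:ℝ) = 1*1 := by norm_num
            _ ≤ 3^(k+2)*(K+4) := mul_le_mul h3pow2 (by linarith) (by norm_num) (by positivity)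
      _ ≤ 2^(k+1) := by
          rw [div_one]
          linarith [pow_pos (by norm_num : (0:ℝ) < 2) (k+1)]
  have hm1 : x * (1/((K+1)*(K+4))) ≤ 2^k := by
    calc x * (1/((K+1)*(K+4))) ≤ 2^k * 1 := by
          apply mul_le_mul hxle hs1 (by positivity) (by positivity)
      _ = 2^k := mul_one _
  have hm2 : x * (1/(9*(K+3)*(K+4))) ≤ 2^k := by
    calc x * (1/(9*(K+3)*(K+4))) ≤ 2^k * 1 := by
          apply mul_le_mul hxle hs2 (by positivity) (by positivity)
      _ = 2^k := mul_one _
  have hexp : (2:ℝ)^(k+4) = 16 * 2^k := by ring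
  have hexp1 : (2:ℝ)^(k+1) = 2 * 2^k := by ring
  have h2pos : (0:ℝ) < 2^k := by positivity
  linarith [habs, hb1, hb2, ht1, hm1, hm2]

open Filter in
lemma tendsto_a :
    Filter.Tendsto (fun j : ℕ => ((2/3:ℝ)^j/(6*((j:ℝ)+3))) ^ ((1:ℝ)/((j:ℝ)+3)))
      Filter.atTop (nhds (2/3:ℝ)) := by
  have h1 : Tendsto (fun j:ℕ => ((j:ℝ)+3)) atTop atTop :=
    Filter.tendsto_atTop_add_const_right _ 3 tendsto_natCast_atTop_atTop
  have hinv : Tendsto (fun j:ℕ => 1/((j:ℝ)+3)) atTop (nhds 0) := by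
    simpa [one_div, Function.comp_def] using tendsto_inv_atTop_zero.comp h1
  have hlog : Tendsto (fun j:ℕ => Real.log ((j:ℝ)+3)/((j:ℝ)+3)) atTop (nhds 0) := by
    have := (Real.tendsto_pow_log_div_mul_add_atTop 1 0 1 one_ne_zero).comp h1
    simpa [Function.comp_def] using this
  have hjj : Tendsto (fun j:ℕ => (j:ℝ)/((j:ℝ)+3)) atTop (nhds 1) := by
    have heq : ∀ j:ℕ, (j:ℝ)/((j:ℝ)+3) = 1 - 3*((j:ℝ)+3)⁻¹ := by
      intro j
      have h : ((j:ℝ)+3) ≠ 0 := by positivity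
      field_simp
      ring
    have h2 := Tendsto.sub (tendsto_const_nhds (x := (1:ℝ))) (hinv.const_mul 3)
    norm_num at h2
    exact h2.congr (fun j => (heq j).symm)
  have hexp : Tendsto (fun j:ℕ => Real.log (2/3) * ((j:ℝ)/((j:ℝ)+3))
      - Real.log 6 * (1/((j:ℝ)+3)) - Real.log ((j:ℝ)+3)/((j:ℝ)+3)) atTop
      (nhds (Real.log (2/3))) := by
    have h2 := ((hjj.const_mul (Real.log (2/3))).sub (hinv.const_mul (Real.log 6))).sub hlog
    norm_num at h2
    convert h2 using 2
    norm_num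
  have key : (fun j : ℕ => ((2/3:ℝ)^j/(6*((j:ℝ)+3))) ^ ((1:ℝ)/((j:ℝ)+3)))
      = fun j : ℕ => Real.exp (Real.log (2/3) * ((j:ℝ)/((j:ℝ)+3))
        - Real.log 6 * (1/((j:ℝ)+3)) - Real.log ((j:ℝ)+3)/((j:ℝ)+3)) := by
    funext j
    have hc : (0:ℝ) < (2/3:ℝ)^j/(6*((j:ℝ)+3)) := by positivity
    rw [Real.rpow_def_of_pos hc]
    congr 1
    rw [Real.log_div (by positivity) (by positivity), Real.log_pow,
      Real.log_mul (by norm_num) (by positivity)]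
    have h : ((j:ℝ)+3) ≠ 0 := by positivity
    field_simp
    ring
  rw [key]
  have h3 := (Real.continuous_exp.tendsto _).comp hexp
  rw [Real.exp_log (by norm_num : (0:ℝ) < 2/3)] at h3
  exact h3

open Filter in
theorem limsup_V_ge :
    2/3 ≤ limsup (fun j : ℕ => |V j| ^ ((1:ℝ)/((j:ℝ)+3))) atTop := by
  have hab : (fun j : ℕ => ((2/3:ℝ)^j/(6*((j:ℝ)+3))) ^ ((1:ℝ)/((j:ℝ)+3)))
      ≤ᶠ[atTop] (fun j : ℕ => |V j| ^ ((1:ℝ)/((j:ℝ)+3))) := by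
    filter_upwards [eventually_ge_atTop 6] with j hj
    obtain ⟨k, rfl⟩ : ∃ k, j = k+1 := ⟨j-1, by omega⟩
    have hk : 5 ≤ k := by omega
    have hlow := V_lower k hk
    have hcast : (((k+1:ℕ)):ℝ) + 3 = (k:ℝ)+4 := by push_cast; ring
    apply Real.rpow_le_rpow (by positivity) ?_ (by positivity)
    rw [hcast]
    exact hlow
  have hbound : IsBoundedUnder (· ≤ ·) atTop (fun j : ℕ => |V j| ^ ((1:ℝ)/((j:ℝ)+3))) := by
    apply isBoundedUnder_of_eventually_le (a := (2:ℝ))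
    filter_upwards [eventually_ge_atTop 1] with j hj
    obtain ⟨k, rfl⟩ : ∃ k, j = k+1 := ⟨j-1, by omega⟩
    have hup := V_upper k
    have hcast : (((k+1:ℕ)):ℝ) + 3 = (k:ℝ)+4 := by push_cast; ring
    have h1 : |V (k+1)| ^ ((1:ℝ)/(((k+1:ℕ):ℝ)+3))
        ≤ ((2:ℝ)^(k+4)) ^ ((1:ℝ)/(((k+1:ℕ):ℝ)+3)) :=
      Real.rpow_le_rpow (abs_nonneg _) hup (by positivity)
    refine h1.trans (le_of_eq ?_)
    rw [hcast, ← Real.rpow_natCast 2 (k+4), ← Real.rpow_mul (by norm_num)]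
    rw [show ((k+4:ℕ):ℝ) * ((1:ℝ)/((k:ℝ)+4)) = 1 by
      push_cast
      field_simp]
    exact Real.rpow_one 2
  have hcob : IsCoboundedUnder (· ≤ ·) atTop
      (fun j : ℕ => ((2/3:ℝ)^j/(6*((j:ℝ)+3))) ^ ((1:ℝ)/((j:ℝ)+3))) :=
    tendsto_a.isCoboundedUnder_le
  calc (2/3:ℝ)
      = limsup (fun j : ℕ => ((2/3:ℝ)^j/(6*((j:ℝ)+3))) ^ ((1:ℝ)/((j:ℝ)+3))) atTop :=
        tendsto_a.limsup_eq.symm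
    _ ≤ limsup (fun j : ℕ => |V j| ^ ((1:ℝ)/((j:ℝ)+3))) atTop :=
        limsup_le_limsup hab hcob hbound
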